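/- One-step expected error inequality for the quantized iterate: let f : ℝ^d → ℝ be differentiable with ∇f L-Lipschitz and f m-strongly convex, 0 < m ≤ L, minimizer x*. Fix t > 0, Δ ≥ 0, set C = t²L²d − 2tm + 1, and let y ∈ ℝ^d and n ∈ ℝ^d with ‖n‖ ≤ Δ/2. If S is uniform on {1,…,d}, then E_S ‖(y + t·d·n) − t·d·[∇f(y + t·d·n)]_S − x*‖² ≤ C·(‖y − x*‖² + t·d·Δ·‖y − x*‖ + t²d²Δ²/4). -/

import Mathlib

open scoped RealInnerProductSpace

/-!
With `a = y + t·d·n − x*` and `g = ∇f(y + t·d·n)`, averaging the coordinate step over `S` gives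
`‖a‖² − 2t⟪g, a⟫ + t²d‖g‖²`, because the coordinate steps are an unbiased estimate of the full
gradient step. Since `∇f(x*) = 0`, strong convexity and the Lipschitz bound give
`⟪g, a⟫ ≥ m‖a‖²` and `‖g‖ ≤ L‖a‖`, so this is at most `C‖a‖²` with `C ≥ 0`; finally
`‖a‖ ≤ ‖y − x*‖ + t·d·Δ/2`, whose square is the bracket on the right.
-/

theorem IsLocalMin.gradient_eq_zero {F : Type*} [NormedAddCommGroup F] [InnerProductSpace ℝ F]
    [CompleteSpace F] {f : F → ℝ} {a : F} (h : IsLocalMin f a) : gradient f a = 0 := by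
  rw [gradient, h.fderiv_eq_zero, map_zero]

theorem EuclideanSpace.sum_norm_sub_smul_single_sq {ι : Type*} [Fintype ι] [DecidableEq ι]
    (a g : EuclideanSpace ℝ ι) (c : ℝ) :
    ∑ i, ‖a - c • EuclideanSpace.single i (g i)‖ ^ 2
      = Fintype.card ι * ‖a‖ ^ 2 - 2 * c * ⟪g, a⟫ + c ^ 2 * ‖g‖ ^ 2 := by
  have coord (i : ι) : ‖a - c • EuclideanSpace.single i (g i)‖ ^ 2
      = ‖a‖ ^ 2 - 2 * c * (g i * a i) + c ^ 2 * g i ^ 2 := by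
    rw [norm_sub_sq_real, real_inner_smul_right, EuclideanSpace.inner_single_right, norm_smul,
      PiLp.norm_single, mul_pow, Real.norm_eq_abs, Real.norm_eq_abs, sq_abs, sq_abs]
    simp only [conj_trivial]
    ring
  simp only [coord, Finset.sum_add_distrib, Finset.sum_sub_distrib, ← Finset.mul_sum,
    Finset.sum_const, Finset.card_univ, nsmul_eq_mul, EuclideanSpace.real_norm_sq_eq,
    PiLp.inner_apply, RCLike.inner_apply, conj_trivial]
  simp only [mul_comm (a _)]

theorem norm_sq_sub_two_mul_inner_add_le {E : Type*} [NormedAddCommGroup E]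
    [InnerProductSpace ℝ E] {a g : E} {m L t d : ℝ} (ht : 0 ≤ t) (hd : 0 ≤ d)
    (hsc : m * ‖a‖ ^ 2 ≤ ⟪g, a⟫) (hLip : ‖g‖ ≤ L * ‖a‖) :
    ‖a‖ ^ 2 - 2 * t * ⟪g, a⟫ + t ^ 2 * d * ‖g‖ ^ 2
      ≤ (t ^ 2 * L ^ 2 * d - 2 * t * m + 1) * ‖a‖ ^ 2 := by
  have hg : ‖g‖ ^ 2 ≤ L ^ 2 * ‖a‖ ^ 2 := by
    rw [← mul_pow]; exact pow_le_pow_left₀ (norm_nonneg g) hLip 2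
  have := mul_le_mul_of_nonneg_left hg (by positivity : 0 ≤ t ^ 2 * d)
  have := mul_le_mul_of_nonneg_left hsc (by positivity : 0 ≤ 2 * t)
  nlinarith

theorem contraction_factor_nonneg {m L t d : ℝ} (hm : 0 ≤ m) (hmL : m ≤ L) (hd : 1 ≤ d) :
    0 ≤ t ^ 2 * L ^ 2 * d - 2 * t * m + 1 := by
  have hmL2 : m ^ 2 ≤ L ^ 2 * d := by nlinarith [pow_le_pow_left₀ hm hmL 2]
  nlinarith [sq_nonneg (t * m - 1), mul_le_mul_of_nonneg_left hmL2 (sq_nonneg t)]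

theorem qrcd_one_step_expected_error_general (d : ℕ) (hd : 1 ≤ d) (L m t Δ : ℝ)
    (hm : 0 < m) (hmL : m ≤ L) (ht : 0 < t)
    (f : EuclideanSpace ℝ (Fin d) → ℝ)
    (hLip : ∀ x y : EuclideanSpace ℝ (Fin d),
      ‖gradient f x - gradient f y‖ ≤ L * ‖x - y‖)
    (hsc : ∀ x y : EuclideanSpace ℝ (Fin d),
      m * ‖x - y‖ ^ 2 ≤ ⟪gradient f x - gradient f y, x - y⟫)
    (xstar : EuclideanSpace ℝ (Fin d)) (hmin : ∀ z, f xstar ≤ f z)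
    (y n : EuclideanSpace ℝ (Fin d)) (hn : ‖n‖ ≤ Δ / 2) :
    (1 / d : ℝ) * ∑ i : Fin d,
        ‖(y + (t * d) • n) -
            (t * d) • EuclideanSpace.single i (gradient f (y + (t * d) • n) i) - xstar‖ ^ 2
      ≤ (t ^ 2 * L ^ 2 * d - 2 * t * m + 1) *
          (‖y - xstar‖ ^ 2 + t * d * Δ * ‖y - xstar‖ + t ^ 2 * d ^ 2 * Δ ^ 2 / 4) := by
  have hd' : (1 : ℝ) ≤ d := by exact_mod_cast hd
  set z := y + (t * d) • n with hz
  set a := z - xstar with ha_def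
  set g := gradient f z
  have hgrad : gradient f xstar = 0 := IsLocalMin.gradient_eq_zero (.of_forall hmin)
  have hsc' : m * ‖a‖ ^ 2 ≤ ⟪g, a⟫ := by simpa only [hgrad, sub_zero] using hsc z xstar
  have hLip' : ‖g‖ ≤ L * ‖a‖ := by simpa only [hgrad, sub_zero] using hLip z xstar
  have ha : ‖a‖ ≤ ‖y - xstar‖ + t * d * (Δ / 2) := by
    calc ‖a‖ = ‖(y - xstar) + (t * d) • n‖ := by rw [ha_def, hz, add_sub_right_comm]
      _ ≤ ‖y - xstar‖ + t * d * ‖n‖ := by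
        grw [norm_add_le, norm_smul, Real.norm_of_nonneg (by positivity)]
      _ ≤ ‖y - xstar‖ + t * d * (Δ / 2) := by gcongr
  have hexpect : (1 / d : ℝ) *
      ∑ i : Fin d, ‖z - (t * d) • EuclideanSpace.single i (g i) - xstar‖ ^ 2 = ‖a‖ ^ 2 - 2 * t * ⟪g, a⟫ + t ^ 2 * d * ‖g‖ ^ 2 := by
    simp only [sub_right_comm z, EuclideanSpace.sum_norm_sub_smul_single_sq, Fintype.card_fin]
    field_simp
    ring
  rw [hexpect]
  calc _ ≤ (t ^ 2 * L ^ 2 * d - 2 * t * m + 1) * ‖a‖ ^ 2 :=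
        norm_sq_sub_two_mul_inner_add_le ht.le (by positivity) hsc' hLip'
    _ ≤ (t ^ 2 * L ^ 2 * d - 2 * t * m + 1) * (‖y - xstar‖ + t * d * (Δ / 2)) ^ 2 := by
        gcongr
        exact contraction_factor_nonneg hm.le hmL hd'
    _ = _ := by ring

/-- One-step expected error inequality for the quantized iterate: if `‖n‖ ≤ Δ/2` and
`C = t²L²d − 2tm + 1`, then for `S` uniform on the `d` coordinates,
`E_S ‖(y + t·d·n) − t·d·[∇f(y + t·d·n)]_S − x*‖²
  ≤ C·(‖y − x*‖² + t·d·Δ·‖y − x*‖ + t²d²Δ²/4)`. -/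
theorem qrcd_one_step_expected_error (d : ℕ) (hd : 1 ≤ d) (L m t Δ : ℝ)
    (hm : 0 < m) (hmL : m ≤ L) (ht : 0 < t) (hΔ : 0 ≤ Δ)
    (f : EuclideanSpace ℝ (Fin d) → ℝ) (hf : Differentiable ℝ f)
    (hLip : ∀ x y : EuclideanSpace ℝ (Fin d),
      ‖gradient f x - gradient f y‖ ≤ L * ‖x - y‖)
    (hsc : ∀ x y : EuclideanSpace ℝ (Fin d),
      m * ‖x - y‖ ^ 2 ≤ ⟪gradient f x - gradient f y, x - y⟫)
    (xstar : EuclideanSpace ℝ (Fin d)) (hmin : ∀ z, f xstar ≤ f z)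
    (y n : EuclideanSpace ℝ (Fin d)) (hn : ‖n‖ ≤ Δ / 2) :
    (1 / d : ℝ) * ∑ i : Fin d,
        ‖(y + (t * d) • n) -
            (t * d) • EuclideanSpace.single i (gradient f (y + (t * d) • n) i) - xstar‖ ^ 2
      ≤ (t ^ 2 * L ^ 2 * d - 2 * t * m + 1) *
          (‖y - xstar‖ ^ 2 + t * d * Δ * ‖y - xstar‖ + t ^ 2 * d ^ 2 * Δ ^ 2 / 4) :=
  qrcd_one_step_expected_error_general d hd L m t Δ hm hmL ht f hLip hsc xstar hmin y n hn
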